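/- arXiv:2310.16945 — 3 statements merged into one kernel-verified Lean document; each statement's English description precedes it below -/
import Mathlib

section
/- If the loss ℓ(Z; ·, g) is σ(g)-strongly convex in expectation with respect to its second argument, then for every θ ∈ Θ: R̃(θ, g) ≥ R(θ, g) + (ν σ(g)/2) V(θ), where R̃(θ,g) = (1−ν) R(θ,g) + ν Σ_j θ_j R(e_j, g) and V(θ) = Σ_j θ_j ‖f_j − f_θ‖². -/
open MeasureTheory Finset

/-- **The Q-aggregation risk dominates the risk plus the variance penalty (Lemma 2).**
If `ℓ(Z; ·, g)` is `σ(g)`-strongly convex in expectation, then for `θ` in the simplex: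
`R̃(θ,g) ≥ R(θ,g) + (νσ(g)/2) V(θ)` where `R̃(θ,g) = (1−ν)R(θ,g) + ν Σ_j θ_j R(e_j,g)` and
`V(θ) = Σ_j θ_j ‖f_j − f_θ‖²`. -/
theorem qagg_risk_ge_risk_add_variance
    {Ω 𝒳 : Type*} [MeasurableSpace Ω] [MeasurableSpace 𝒳]
    (P : Measure Ω) [IsProbabilityMeasure P]
    (X : Ω → 𝒳)
    (M : ℕ) (hM : 0 < M)
    (f : Fin M → 𝒳 → ℝ)
    (ℓg : Ω → ℝ → ℝ)   -- the loss ℓ(z; ·, g) at a fixed nuisance g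
    (ℓ'g : Ω → ℝ → ℝ)  -- its derivative in the second argument
    (σ ν : ℝ) (hν0 : 0 < ν) (hν1 : ν < 1)
    -- σ(g)-strong convexity in expectation over the convex hull of the candidates
    (hconv : ∀ θ ∈ stdSimplex ℝ (Fin M), ∀ θ' ∈ stdSimplex ℝ (Fin M),
      ∫ ω, (ℓg ω (∑ j, θ' j * f j (X ω)) - ℓg ω (∑ j, θ j * f j (X ω))) ∂P
        ≥ (∫ ω, ℓ'g ω (∑ j, θ j * f j (X ω))
              * ((∑ j, θ' j * f j (X ω)) - ∑ j, θ j * f j (X ω)) ∂P)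
          + σ / 2 * ∫ ω, ((∑ j, θ j * f j (X ω)) - ∑ j, θ' j * f j (X ω)) ^ 2 ∂P)
    -- regularity (differentiation under the expectation assumed valid)
    (hintl : ∀ θ ∈ stdSimplex ℝ (Fin M),
      Integrable (fun ω => ℓg ω (∑ j, θ j * f j (X ω))) P)
    (hintd : ∀ θ ∈ stdSimplex ℝ (Fin M), ∀ j : Fin M,
      Integrable (fun ω => ℓ'g ω (∑ l, θ l * f l (X ω)) * f j (X ω)) P)
    (θ : Fin M → ℝ) (hθ : θ ∈ stdSimplex ℝ (Fin M)) :
    (1 - ν) * (∫ ω, ℓg ω (∑ j, θ j * f j (X ω)) ∂P)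
        + ν * ∑ j, θ j * ∫ ω, ℓg ω (f j (X ω)) ∂P
      ≥ (∫ ω, ℓg ω (∑ j, θ j * f j (X ω)) ∂P)
        + ν * σ / 2 * ∑ j, θ j *
            ∫ ω, (f j (X ω) - ∑ l, θ l * f l (X ω)) ^ 2 ∂P := by
  obtain ⟨hθ0, hθ1⟩ := hθ
  -- notation
  set Rθ : ℝ := ∫ ω, ℓg ω (∑ j, θ j * f j (X ω)) ∂P with hRθ
  have hej : ∀ j : Fin M, (fun i => if i = j then (1:ℝ) else 0) ∈ stdSimplex ℝ (Fin M) := by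
    intro j
    refine ⟨fun i => ?_, by simp⟩
    dsimp only; split <;> norm_num
  have hejsum : ∀ (j : Fin M) (x : 𝒳),
      ∑ l, (if l = j then (1:ℝ) else 0) * f l x = f j x := by
    intro j x
    rw [Finset.sum_eq_single j]
    · simp
    · intro b _ hb; simp [hb]
    · simp
  set a : Fin M → ℝ := fun j => ∫ ω, ℓ'g ω (∑ l, θ l * f l (X ω)) * f j (X ω) ∂P with ha
  have key : ∀ j : Fin M,
      (∫ ω, ℓg ω (f j (X ω)) ∂P) - Rθ
        ≥ (a j - ∑ l, θ l * a l)
          + σ / 2 * ∫ ω, (f j (X ω) - ∑ l, θ l * f l (X ω)) ^ 2 ∂P := by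
    intro j
    have h := hconv θ ⟨hθ0, hθ1⟩ _ (hej j)
    simp only [hejsum] at h
    -- split the left integral
    have hl : Integrable (fun ω => ℓg ω (f j (X ω))) P := by
      have := hintl _ (hej j)
      simpa only [hejsum] using this
    have hL : (∫ ω, (ℓg ω (f j (X ω)) - ℓg ω (∑ l, θ l * f l (X ω))) ∂P)
        = (∫ ω, ℓg ω (f j (X ω)) ∂P) - Rθ := by
      rw [integral_sub hl (hintl θ ⟨hθ0, hθ1⟩)]
    rw [hL] at h
    -- the gradient term
    have hint2 : Integrable
        (fun ω => ∑ l, θ l * (ℓ'g ω (∑ l, θ l * f l (X ω)) * f l (X ω))) P := by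
      apply integrable_finset_sum
      intro l _
      exact (hintd θ ⟨hθ0, hθ1⟩ l).const_mul _
    have hG : (∫ ω, ℓ'g ω (∑ l, θ l * f l (X ω))
          * (f j (X ω) - ∑ l, θ l * f l (X ω)) ∂P)
        = a j - ∑ l, θ l * a l := by
      have heq : ∀ ω, ℓ'g ω (∑ l, θ l * f l (X ω))
          * (f j (X ω) - ∑ l, θ l * f l (X ω))
          = ℓ'g ω (∑ l, θ l * f l (X ω)) * f j (X ω)
            - ∑ l, θ l * (ℓ'g ω (∑ l, θ l * f l (X ω)) * f l (X ω)) := by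
        intro ω
        rw [mul_sub, Finset.mul_sum]
        congr 1
        apply Finset.sum_congr rfl
        intro l _; ring
      simp_rw [heq]
      rw [integral_sub (hintd θ ⟨hθ0, hθ1⟩ j) hint2, integral_finset_sum]
      · congr 1
        apply Finset.sum_congr rfl
        intro l _
        rw [integral_const_mul]
      · intro l _
        exact (hintd θ ⟨hθ0, hθ1⟩ l).const_mul _
    rw [hG] at h
    have hsq : ∀ ω, ((∑ l, θ l * f l (X ω)) - f j (X ω)) ^ 2
        = (f j (X ω) - ∑ l, θ l * f l (X ω)) ^ 2 := fun ω => by ring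
    simp_rw [hsq] at h
    exact h
  -- sum the per-candidate inequalities
  have hsum : ∑ j, θ j * ((∫ ω, ℓg ω (f j (X ω)) ∂P) - Rθ)
      ≥ ∑ j, θ j * ((a j - ∑ l, θ l * a l)
          + σ / 2 * ∫ ω, (f j (X ω) - ∑ l, θ l * f l (X ω)) ^ 2 ∂P) := by
    apply Finset.sum_le_sum
    intro j _
    exact mul_le_mul_of_nonneg_left (key j) (hθ0 j)
  have h1 : ∑ j, θ j * ((∫ ω, ℓg ω (f j (X ω)) ∂P) - Rθ)
      = (∑ j, θ j * ∫ ω, ℓg ω (f j (X ω)) ∂P) - Rθ := by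
    simp_rw [mul_sub]
    rw [Finset.sum_sub_distrib, ← Finset.sum_mul, hθ1, one_mul]
  have h2 : ∑ j, θ j * ((a j - ∑ l, θ l * a l)
          + σ / 2 * ∫ ω, (f j (X ω) - ∑ l, θ l * f l (X ω)) ^ 2 ∂P)
      = σ / 2 * ∑ j, θ j * ∫ ω, (f j (X ω) - ∑ l, θ l * f l (X ω)) ^ 2 ∂P := by
    simp_rw [mul_add, mul_sub]
    rw [Finset.sum_add_distrib, Finset.sum_sub_distrib, ← Finset.sum_mul, hθ1, one_mul,
      sub_self, zero_add, Finset.mul_sum]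
    apply Finset.sum_congr rfl
    intro j _; ring
  rw [h1, h2] at hsum
  nlinarith [hsum, hν0.le]
end

section
/- (Guarantee for the greedy model averaging algorithm GMA-0₊.) Let y ∈ ℝⁿ and x_1,…,x_M ∈ ℝⁿ, write x_θ = Σ_j θ_j x_j for θ ∈ Θ, and let ‖v‖_n² = (1/n)Σ_{i=1}^n v_i². For ν ∈ (0,1), β ≥ 0, and prior weights π_j, define Q(θ) = (1−ν)‖x_θ − y‖_n² + ν Σ_j θ_j ‖x_j − y‖_n² + (β/n) Σ_j θ_j log(1/π_j) and V_n(θ) = Σ_j θ_j ‖x_j − x_θ‖_n². Run the greedy algorithm: θ^{(0)} = 0; for k = 1,2,…, set a_k = 2/(k+1), choose J^{(k)} ∈ argmin_j Q((1−a_k)θ^{(k−1)} + a_k e_j), and set θ^{(k)} = argmin of Q over {θ ∈ Θ : θ_j = 0 for j ∉ {J^{(1)},…,J^{(k)}}}. Then for every k ≥ 1: Q(θ^{(k)}) ≤ min_{θ∈Θ} { Q(θ) + (4(1−ν)/(k+3)) · V_n(θ) }. -/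
open Finset

lemma gma_abstract (M n : ℕ) (c N G a : ℝ) (hc : 0 ≤ c) (hN : 0 ≤ N)
    (ha0 : 0 ≤ a) (ha1 : a ≤ 1)
    (θ : Fin M → ℝ) (hθ1 : ∑ j, θ j = 1)
    (w : Fin M → Fin n → ℝ) (u s : Fin n → ℝ) (g : Fin M → ℝ)
    (hw : ∀ i, ∑ j, θ j * w j i = s i) :
    ∑ j, θ j * (c * (N * ∑ i, ((1 - a) * u i + a * w j i) ^ 2) + ((1 - a) * G + a * g j))
    ≤ (1 - a) * (c * (N * ∑ i, (u i) ^ 2) + G)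
      + a * (c * (N * ∑ i, (s i) ^ 2) + ∑ j, θ j * g j)
      + a ^ 2 * c * ∑ j, θ j * (N * ∑ i, (w j i - s i) ^ 2) := by
  have hpoint : ∀ i, ∑ j, θ j * ((1 - a) * u i + a * w j i) ^ 2
      ≤ (1 - a) * (u i) ^ 2 + a * (s i) ^ 2 + a ^ 2 * ∑ j, θ j * (w j i - s i) ^ 2 := by
    intro i
    have e1 : ∑ j, θ j * ((1 - a) * u i + a * w j i) ^ 2
        = ((1 - a) ^ 2 * (u i) ^ 2) * ∑ j, θ j + (2 * a * (1 - a) * u i) * s i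
          + a ^ 2 * ∑ j, θ j * (w j i) ^ 2 := by
      rw [Finset.sum_congr rfl (fun j _ => show θ j * ((1 - a) * u i + a * w j i) ^ 2
          = ((1 - a) ^ 2 * (u i) ^ 2) * θ j + (2 * a * (1 - a) * u i) * (θ j * w j i)
            + a ^ 2 * (θ j * (w j i) ^ 2) from by ring)]
      rw [Finset.sum_add_distrib, Finset.sum_add_distrib, ← Finset.mul_sum, ← Finset.mul_sum,
        ← Finset.mul_sum, hw]
    have e2 : ∑ j, θ j * (w j i - s i) ^ 2
        = ∑ j, θ j * (w j i) ^ 2 - (2 * s i) * s i + (s i) ^ 2 * ∑ j, θ j := by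
      rw [Finset.sum_congr rfl (fun j _ => show θ j * (w j i - s i) ^ 2
          = θ j * (w j i) ^ 2 - (2 * s i) * (θ j * w j i) + (s i) ^ 2 * θ j from by ring)]
      rw [Finset.sum_add_distrib, Finset.sum_sub_distrib, ← Finset.mul_sum, ← Finset.mul_sum, hw]
    rw [e1, e2, hθ1]
    nlinarith [mul_nonneg (mul_nonneg ha0 (sub_nonneg.mpr ha1)) (sq_nonneg (u i - s i))]
  have hsum : ∑ i, ∑ j, θ j * ((1 - a) * u i + a * w j i) ^ 2
      ≤ (1 - a) * ∑ i, (u i) ^ 2 + a * ∑ i, (s i) ^ 2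
        + a ^ 2 * ∑ i, ∑ j, θ j * (w j i - s i) ^ 2 := by
    calc ∑ i, ∑ j, θ j * ((1 - a) * u i + a * w j i) ^ 2
        ≤ ∑ i, ((1 - a) * (u i) ^ 2 + a * (s i) ^ 2 + a ^ 2 * ∑ j, θ j * (w j i - s i) ^ 2) :=
          Finset.sum_le_sum fun i _ => hpoint i
      _ = _ := by
          rw [Finset.sum_add_distrib, Finset.sum_add_distrib, ← Finset.mul_sum, ← Finset.mul_sum,
            ← Finset.mul_sum]
  have hLeq : ∑ j, θ j * (c * (N * ∑ i, ((1 - a) * u i + a * w j i) ^ 2) + ((1 - a) * G + a * g j))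
      = (c * N) * ∑ i, ∑ j, θ j * ((1 - a) * u i + a * w j i) ^ 2
        + ((1 - a) * G + a * ∑ j, θ j * g j) := by
    rw [Finset.sum_congr rfl (fun j _ => show
        θ j * (c * (N * ∑ i, ((1 - a) * u i + a * w j i) ^ 2) + ((1 - a) * G + a * g j))
        = (c * N) * ∑ i, θ j * ((1 - a) * u i + a * w j i) ^ 2
          + (((1 - a) * G) * θ j + a * (θ j * g j)) from by rw [← Finset.mul_sum]; ring)]
    rw [Finset.sum_add_distrib, Finset.sum_add_distrib, ← Finset.mul_sum, ← Finset.mul_sum,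
      ← Finset.mul_sum, hθ1, Finset.sum_comm]
    ring
  have hV : ∑ j, θ j * (N * ∑ i, (w j i - s i) ^ 2)
      = N * ∑ i, ∑ j, θ j * (w j i - s i) ^ 2 := by
    rw [Finset.sum_congr rfl (fun j _ => show θ j * (N * ∑ i, (w j i - s i) ^ 2)
        = N * ∑ i, θ j * (w j i - s i) ^ 2 from by rw [← Finset.mul_sum]; ring)]
    rw [← Finset.mul_sum, Finset.sum_comm]
  rw [hLeq, hV]
  have h2 := mul_le_mul_of_nonneg_left hsum (mul_nonneg hc hN)
  nlinarith [h2]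


/-- **Guarantee for the greedy model averaging algorithm GMA-0₊ (Theorem, greedy
approximation).** For the Q-aggregation objective `Q` on vectors in `ℝⁿ` and the variance
functional `Vₙ`, the `k`-step output `θs k` of GMA-0₊ satisfies, for every `k ≥ 1`:
`Q(θ^{(k)}) ≤ min_{θ ∈ Θ} {Q(θ) + (4(1−ν)/(k+3))·Vₙ(θ)}`. -/
theorem gma_greedy_guarantee
    (M n : ℕ) (hM : 0 < M) (hn : 0 < n)
    (y : Fin n → ℝ) (x : Fin M → Fin n → ℝ)
    (ν : ℝ) (hν0 : 0 < ν) (hν1 : ν < 1)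
    (β : ℝ) (hβ : 0 ≤ β)
    (π : Fin M → ℝ) (hπ : ∀ j, 0 < π j) (hπsum : ∑ j, π j = 1)
    -- the Q-aggregation objective on weight vectors
    (Q : (Fin M → ℝ) → ℝ)
    (hQ : ∀ θ, Q θ =
      (1 - ν) * ((n : ℝ)⁻¹ * ∑ i, ((∑ j, θ j * x j i) - y i) ^ 2)
        + ν * ∑ j, θ j * ((n : ℝ)⁻¹ * ∑ i, (x j i - y i) ^ 2)
        + β / n * ∑ j, θ j * Real.log (1 / π j))
    -- the empirical variance functional
    (Vn : (Fin M → ℝ) → ℝ)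
    (hVn : ∀ θ, Vn θ =
      ∑ j, θ j * ((n : ℝ)⁻¹ * ∑ i, (x j i - ∑ l, θ l * x l i) ^ 2))
    -- the greedy iterates: θ^{(0)} = 0; at step k, a_k = 2/(k+1), J k is a greedy
    -- coordinate, and θ^{(k)} minimizes Q over the simplex restricted to the support
    -- {J 1, …, J k}
    (J : ℕ → Fin M) (θs : ℕ → Fin M → ℝ)
    (hθ0 : θs 0 = 0)
    (hJ : ∀ k : ℕ, 1 ≤ k → ∀ j : Fin M,
      Q ((1 - 2 / ((k : ℝ) + 1)) • θs (k - 1) + (2 / ((k : ℝ) + 1)) • (Pi.single (J k) 1 : Fin M → ℝ))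
        ≤ Q ((1 - 2 / ((k : ℝ) + 1)) • θs (k - 1) + (2 / ((k : ℝ) + 1)) • (Pi.single j 1 : Fin M → ℝ)))
    (hθmem : ∀ k : ℕ, 1 ≤ k → θs k ∈ stdSimplex ℝ (Fin M))
    (hθsupp : ∀ k : ℕ, 1 ≤ k → ∀ j : Fin M,
      (∀ l : ℕ, 1 ≤ l → l ≤ k → J l ≠ j) → θs k j = 0)
    (hθopt : ∀ k : ℕ, 1 ≤ k → ∀ θ ∈ stdSimplex ℝ (Fin M),
      (∀ j : Fin M, (∀ l : ℕ, 1 ≤ l → l ≤ k → J l ≠ j) → θ j = 0) →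
        Q (θs k) ≤ Q θ) :
    ∀ k : ℕ, 1 ≤ k → ∀ θ ∈ stdSimplex ℝ (Fin M),
      Q (θs k) ≤ Q θ + 4 * (1 - ν) / ((k : ℝ) + 3) * Vn θ := by

  -- reformulate Q with a single linear part
  set g : Fin M → ℝ := fun l =>
    ν * ((n : ℝ)⁻¹ * ∑ i, (x l i - y i) ^ 2) + β / n * Real.log (1 / π l) with hg
  have hQg : ∀ θ' : Fin M → ℝ, Q θ' =
      (1 - ν) * ((n : ℝ)⁻¹ * ∑ i, ((∑ l, θ' l * x l i) - y i) ^ 2) + ∑ l, θ' l * g l := by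
    intro θ'
    rw [hQ θ']
    have h : ν * ∑ j, θ' j * ((n : ℝ)⁻¹ * ∑ i, (x j i - y i) ^ 2)
        + β / n * ∑ j, θ' j * Real.log (1 / π j) = ∑ l, θ' l * g l := by
      rw [Finset.mul_sum, Finset.mul_sum, ← Finset.sum_add_distrib]
      exact Finset.sum_congr rfl fun l _ => by simp only [hg]; ring
    rw [← h]; ring
  -- the one-step chain inequality
  have hchain : ∀ k : ℕ, 1 ≤ k → ∀ θ ∈ stdSimplex ℝ (Fin M),
      Q (θs k) ≤ (1 - 2 / ((k : ℝ) + 1)) * Q (θs (k - 1)) + (2 / ((k : ℝ) + 1)) * Q θ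
        + (2 / ((k : ℝ) + 1)) ^ 2 * (1 - ν) * Vn θ := by
    intro k hk θ hθ
    obtain ⟨hθnn, hθ1⟩ := hθ
    have hk1 : (1 : ℝ) ≤ (k : ℝ) := by exact_mod_cast hk
    have ha0 : (0 : ℝ) ≤ 2 / ((k : ℝ) + 1) := by positivity
    have ha1 : 2 / ((k : ℝ) + 1) ≤ 1 := by
      rw [div_le_one (by linarith)]; linarith
    -- facts about η = θs (k-1)
    have hfacts : (∀ j, 0 ≤ θs (k - 1) j ∨ (1 - 2 / ((k : ℝ) + 1)) = 0)
        ∧ ((1 - 2 / ((k : ℝ) + 1)) * ∑ j, θs (k - 1) j = 1 - 2 / ((k : ℝ) + 1))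
        ∧ (∀ j : Fin M, (∀ l : ℕ, 1 ≤ l → l ≤ k → J l ≠ j) → θs (k - 1) j = 0) := by
      rcases eq_or_lt_of_le hk with h1 | h2
      · subst h1
        refine ⟨fun j => Or.inl ?_, ?_, fun j _ => ?_⟩
        · simp [hθ0]
        · norm_num [hθ0]
        · simp [hθ0]
      · have hk2 : 1 ≤ k - 1 := by omega
        obtain ⟨hnn, hsum⟩ := hθmem (k - 1) hk2
        exact ⟨fun j => Or.inl (hnn j), by rw [hsum]; ring,
          fun j h => hθsupp (k - 1) hk2 j (fun l hl1 hl2 => h l hl1 (by omega))⟩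
    obtain ⟨hηnn, hηsum, hηsupp⟩ := hfacts
    have hηnn' : ∀ j, 0 ≤ (1 - 2 / ((k : ℝ) + 1)) * θs (k - 1) j := by
      intro j
      rcases hηnn j with h | h
      · exact mul_nonneg (by linarith) h
      · rw [h, zero_mul]
    have hmixmem : ∀ j : Fin M,
        ((1 - 2 / ((k : ℝ) + 1)) • θs (k - 1) + (2 / ((k : ℝ) + 1)) • (Pi.single j 1 : Fin M → ℝ))
          ∈ stdSimplex ℝ (Fin M) := by
      intro j
      constructor
      · intro l
        simp only [Pi.add_apply, Pi.smul_apply, smul_eq_mul]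
        have h1 := hηnn' l
        have h2 : 0 ≤ 2 / ((k : ℝ) + 1) * (Pi.single j 1 : Fin M → ℝ) l := by
          apply mul_nonneg ha0
          rcases eq_or_ne l j with rfl | hne
          · simp
          · simp [Pi.single_eq_of_ne hne]
        linarith
      · simp only [Pi.add_apply, Pi.smul_apply, smul_eq_mul]
        rw [Finset.sum_add_distrib, ← Finset.mul_sum, ← Finset.mul_sum, hηsum]
        have hone : ∑ l, (Pi.single j 1 : Fin M → ℝ) l = 1 := by simp
        rw [hone]; ring
    have hA : Q (θs k) ≤ Q ((1 - 2 / ((k : ℝ) + 1)) • θs (k - 1)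
        + (2 / ((k : ℝ) + 1)) • (Pi.single (J k) 1 : Fin M → ℝ)) := by
      apply hθopt k hk _ (hmixmem (J k))
      intro j hj
      simp only [Pi.add_apply, Pi.smul_apply, smul_eq_mul]
      rw [hηsupp j hj, Pi.single_eq_of_ne ((hj k hk le_rfl).symm), mul_zero, mul_zero, add_zero]
    have hC : Q (θs k) ≤ ∑ j, θ j * Q ((1 - 2 / ((k : ℝ) + 1)) • θs (k - 1)
        + (2 / ((k : ℝ) + 1)) • (Pi.single j 1 : Fin M → ℝ)) := by
      calc Q (θs k) = ∑ j, θ j * Q (θs k) := by rw [← Finset.sum_mul, hθ1, one_mul]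
        _ ≤ _ := Finset.sum_le_sum fun j _ =>
            mul_le_mul_of_nonneg_left (hA.trans (hJ k hk j)) (hθnn j)
    refine hC.trans ?_
    -- rewrite mixtures and apply the abstract lemma
    have hmix1 : ∀ (j : Fin M) (i : Fin n),
        (∑ l, ((1 - 2 / ((k : ℝ) + 1)) • θs (k - 1)
            + (2 / ((k : ℝ) + 1)) • (Pi.single j 1 : Fin M → ℝ)) l * x l i) - y i
        = (1 - 2 / ((k : ℝ) + 1)) * ((∑ l, θs (k - 1) l * x l i) - y i)
          + (2 / ((k : ℝ) + 1)) * (x j i - y i) := by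
      intro j i
      simp only [Pi.add_apply, Pi.smul_apply, smul_eq_mul, add_mul, Finset.sum_add_distrib,
        mul_assoc, ← Finset.mul_sum]
      have hsingle : ∑ l, (Pi.single j 1 : Fin M → ℝ) l * x l i = x j i := by
        simp [Pi.single_apply, ite_mul]
      rw [hsingle]; ring
    have hmix2 : ∀ j : Fin M,
        ∑ l, ((1 - 2 / ((k : ℝ) + 1)) • θs (k - 1)
            + (2 / ((k : ℝ) + 1)) • (Pi.single j 1 : Fin M → ℝ)) l * g l
        = (1 - 2 / ((k : ℝ) + 1)) * (∑ l, θs (k - 1) l * g l) + (2 / ((k : ℝ) + 1)) * g j := by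
      intro j
      simp only [Pi.add_apply, Pi.smul_apply, smul_eq_mul, add_mul, Finset.sum_add_distrib,
        mul_assoc, ← Finset.mul_sum]
      have hsingle : ∑ l, (Pi.single j 1 : Fin M → ℝ) l * g l = g j := by
        simp [Pi.single_apply, ite_mul]
      rw [hsingle]
    have hxs : ∀ (j : Fin M) (i : Fin n),
        x j i - ∑ l, θ l * x l i = (x j i - y i) - ((∑ l, θ l * x l i) - y i) := by
      intro j i; ring
    have hw : ∀ i, ∑ j, θ j * (x j i - y i) = (∑ l, θ l * x l i) - y i := by
      intro i
      simp only [mul_sub, Finset.sum_sub_distrib, ← Finset.sum_mul, hθ1, one_mul]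
    simp only [hQg, hVn, hmix1, hmix2, hxs]
    exact gma_abstract M n (1 - ν) (n : ℝ)⁻¹ (∑ l, θs (k - 1) l * g l) (2 / ((k : ℝ) + 1))
      (by linarith) (by positivity) ha0 ha1 θ hθ1
      (fun j i => x j i - y i) (fun i => (∑ l, θs (k - 1) l * x l i) - y i)
      (fun i => (∑ l, θ l * x l i) - y i) g hw
  -- induction
  intro k hk
  induction k, hk using Nat.le_induction with
  | base =>
    intro θ hθ
    have h := hchain 1 le_rfl θ hθ
    push_cast at h ⊢
    linarith
  | succ k hk ih =>
    intro θ hθ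
    have h := hchain (k + 1) (by omega) θ hθ
    have hih := ih θ hθ
    have hV : 0 ≤ Vn θ := by
      rw [hVn]
      apply Finset.sum_nonneg
      intro j _
      apply mul_nonneg (hθ.1 j)
      positivity
    have hk1 : (1 : ℝ) ≤ (k : ℝ) := by exact_mod_cast hk
    have hb1 : (0 : ℝ) < (k : ℝ) + 2 := by linarith
    have hb2 : (0 : ℝ) < (k : ℝ) + 3 := by linarith
    have hb3 : (0 : ℝ) < (k : ℝ) + 4 := by linarith
    push_cast at h ⊢
    have hc1 : ((k : ℝ) + 1) + 1 = (k : ℝ) + 2 := by ring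
    rw [hc1] at h
    -- h : Q (θs (k+1)) ≤ (1 - 2/(k+2)) * Q (θs k) + (2/(k+2)) * Q θ + (2/(k+2))^2*(1-ν)*Vn θ
    have h1ν : (0 : ℝ) ≤ 1 - ν := by linarith
    have hA1 : 2 / ((k : ℝ) + 2) ≤ 1 := by rw [div_le_one hb1]; linarith
    have key : (1 - 2 / ((k : ℝ) + 2)) * (4 / ((k : ℝ) + 3)) + (2 / ((k : ℝ) + 2)) ^ 2
        ≤ 4 / ((k : ℝ) + 4) := by
      have e : (1 - 2 / ((k : ℝ) + 2)) * (4 / ((k : ℝ) + 3)) + (2 / ((k : ℝ) + 2)) ^ 2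
          = (4 * (k : ℝ) * ((k : ℝ) + 2) + 4 * ((k : ℝ) + 3)) / (((k : ℝ) + 2) ^ 2 * ((k : ℝ) + 3)) := by
        field_simp
        ring
      rw [e, div_le_div_iff₀ (by positivity) (by positivity)]
      nlinarith [hk1]
    have hcoef : (1 - 2 / ((k : ℝ) + 2)) * (4 * (1 - ν) / ((k : ℝ) + 3))
        + (2 / ((k : ℝ) + 2)) ^ 2 * (1 - ν) ≤ 4 * (1 - ν) / ((k : ℝ) + 4) := by
      calc (1 - 2 / ((k : ℝ) + 2)) * (4 * (1 - ν) / ((k : ℝ) + 3))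
            + (2 / ((k : ℝ) + 2)) ^ 2 * (1 - ν)
          = (1 - ν) * ((1 - 2 / ((k : ℝ) + 2)) * (4 / ((k : ℝ) + 3)) + (2 / ((k : ℝ) + 2)) ^ 2) := by
            ring
        _ ≤ (1 - ν) * (4 / ((k : ℝ) + 4)) := mul_le_mul_of_nonneg_left key h1ν
        _ = 4 * (1 - ν) / ((k : ℝ) + 4) := by ring
    have step1 : Q (θs (k + 1)) ≤ Q θ + ((1 - 2 / ((k : ℝ) + 2)) * (4 * (1 - ν) / ((k : ℝ) + 3))
        + (2 / ((k : ℝ) + 2)) ^ 2 * (1 - ν)) * Vn θ := by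
      have hm := mul_le_mul_of_nonneg_left hih (show (0 : ℝ) ≤ 1 - 2 / ((k : ℝ) + 2) by linarith)
      nlinarith [hm, h]
    have step2 := mul_le_mul_of_nonneg_right hcoef hV
    have hc2 : ((k : ℝ) + 1) + 3 = (k : ℝ) + 4 := by ring
    rw [hc2]
    linarith [step1, step2]
end

section
/- (Slow rates without strong convexity.) Let F' ⊇ F be function classes, f' ∈ F', and let f̂ ∈ F be any estimator. Suppose: (i) for all g ∈ G and all f ∈ Star(F, f'), the map t ↦ P ℓ_{f' + t(f − f'), g} on [0,1] is differentiable, so that first-order Taylor expansions hold exactly at an intermediate point; and (ii) there exists β₄ ≥ 0 and a distance d on G such that for all f, f̄ ∈ Star(F, f') and g ∈ G: |D_f Pℓ(f̄, g)[f − f'] − D_f Pℓ(f̄, g₀)[f − f']| ≤ β₄ · d(g, g₀)², where D_f Pℓ(f̄, g)[h] denotes the directional (Gateaux) derivative of f ↦ Pℓ_{f,g} at f̄ in direction h. Then: Pℓ_{f̂, g₀} − Pℓ_{f', g₀} ≤ (Pℓ_{f̂, ĝ} − Pℓ_{f', ĝ}) + β₄ · d(ĝ, g₀)². -/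
open MeasureTheory

/-- **Slow rates without strong convexity (Theorem, slow rates).**
`Lrisk g f = Pℓ_{f,g}` is the population risk; `Dfun g f̄ h` is the Gateaux derivative of
`f ↦ Pℓ_{f,g}` at `f̄` in direction `h`. Hypothesis (i): for every `g ∈ G` and every
`f ∈ F`, the map `t ↦ Pℓ_{f'+t(f−f'),g}` is differentiable on `[0,1]` with derivative the
Gateaux derivative along the segment (so exact first-order Taylor expansions hold at an
intermediate point). Hypothesis (ii): a second-order bound
`|D_f Pℓ(f̄,g)[f−f'] − D_f Pℓ(f̄,g₀)[f−f']| ≤ β₄ d(g,g₀)²` on `Star(F,f')`. Conclusion: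
`Pℓ_{f̂,g₀} − Pℓ_{f',g₀} ≤ (Pℓ_{f̂,ĝ} − Pℓ_{f',ĝ}) + β₄ d(ĝ,g₀)²`. -/
theorem slow_rates_without_strong_convexity
    {Ω 𝒳 G : Type*} [MeasurableSpace Ω]
    (P : Measure Ω) [IsProbabilityMeasure P]
    (X : Ω → 𝒳)
    (ℓ : G → Ω → ℝ → ℝ)
    (Gset : Set G) (g0 ghat : G) (hg0 : g0 ∈ Gset) (hghat : ghat ∈ Gset)
    (F F' : Set (𝒳 → ℝ)) (hFF' : F ⊆ F')
    (f' : 𝒳 → ℝ) (hf' : f' ∈ F')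
    (fhat : 𝒳 → ℝ) (hfhat : fhat ∈ F)    -- the estimator, any element of F
    -- the population risk Pℓ_{f,g}
    (Lrisk : G → (𝒳 → ℝ) → ℝ)
    (hLrisk : ∀ g h, Lrisk g h = ∫ ω, ℓ g ω (h (X ω)) ∂P)
    -- the Gateaux directional derivative D_f Pℓ(f̄, g)[h]
    (Dfun : G → (𝒳 → ℝ) → (𝒳 → ℝ) → ℝ)
    (hGateaux : ∀ g ∈ Gset, ∀ f ∈ F, ∀ t : ℝ, t ∈ Set.Icc (0 : ℝ) 1 →
      HasDerivAt (fun s : ℝ => Lrisk g (fun xx => f' xx + s * (f xx - f' xx)))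
        (Dfun g (fun xx => f' xx + t * (f xx - f' xx)) (fun xx => f xx - f' xx)) t)
    -- (ii) the mixed second-order bound on Star(F, f')
    (β₄ : ℝ) (hβ₄ : 0 ≤ β₄)
    (d : G → G → ℝ)
    (hmixed : ∀ g ∈ Gset,
      ∀ fbar ∈ {h : 𝒳 → ℝ | ∃ f ∈ F, ∃ t ∈ Set.Icc (0 : ℝ) 1,
        h = fun xx => f' xx + t * (f xx - f' xx)},
      ∀ f ∈ {h : 𝒳 → ℝ | ∃ f₁ ∈ F, ∃ t ∈ Set.Icc (0 : ℝ) 1,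
        h = fun xx => f' xx + t * (f₁ xx - f' xx)},
      |Dfun g fbar (fun xx => f xx - f' xx) - Dfun g0 fbar (fun xx => f xx - f' xx)|
        ≤ β₄ * d g g0 ^ 2) :
    Lrisk g0 fhat - Lrisk g0 f'
      ≤ (Lrisk ghat fhat - Lrisk ghat f') + β₄ * d ghat g0 ^ 2 := by

  have key : ∀ t ∈ Set.Icc (0:ℝ) 1, ∀ g ∈ Gset,
      HasDerivAt (fun s : ℝ => Lrisk g (fun xx => f' xx + s * (fhat xx - f' xx)))
        (Dfun g (fun xx => f' xx + t * (fhat xx - f' xx)) (fun xx => fhat xx - f' xx)) t :=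
    fun t ht g hg => hGateaux g hg fhat hfhat t ht
  set φ : ℝ → ℝ := fun s =>
    Lrisk g0 (fun xx => f' xx + s * (fhat xx - f' xx)) -
      Lrisk ghat (fun xx => f' xx + s * (fhat xx - f' xx)) with hφ
  have hderiv : ∀ t ∈ Set.Icc (0:ℝ) 1, HasDerivAt φ
      (Dfun g0 (fun xx => f' xx + t * (fhat xx - f' xx)) (fun xx => fhat xx - f' xx) -
       Dfun ghat (fun xx => f' xx + t * (fhat xx - f' xx)) (fun xx => fhat xx - f' xx)) t :=
    fun t ht => (key t ht g0 hg0).sub (key t ht ghat hghat)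
  have hcont : ContinuousOn φ (Set.Icc 0 1) :=
    fun t ht => (hderiv t ht).continuousAt.continuousWithinAt
  obtain ⟨c, hc, hceq⟩ := exists_hasDerivAt_eq_slope φ
    (fun t => Dfun g0 (fun xx => f' xx + t * (fhat xx - f' xx)) (fun xx => fhat xx - f' xx) -
       Dfun ghat (fun xx => f' xx + t * (fhat xx - f' xx)) (fun xx => fhat xx - f' xx))
    (zero_lt_one) hcont
    (fun t ht => hderiv t (Set.Ioo_subset_Icc_self ht))
  have h1 : ∀ g, Lrisk g (fun xx => f' xx + (1:ℝ) * (fhat xx - f' xx)) = Lrisk g fhat := by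
    intro g; congr 1; funext xx; ring
  have h0 : ∀ g, Lrisk g (fun xx => f' xx + (0:ℝ) * (fhat xx - f' xx)) = Lrisk g f' := by
    intro g; congr 1; funext xx; ring
  have hφ1 : φ 1 - φ 0 = (Lrisk g0 fhat - Lrisk g0 f') - (Lrisk ghat fhat - Lrisk ghat f') := by
    simp only [hφ, h1, h0]; ring
  have hstar : (fun xx => f' xx + c * (fhat xx - f' xx)) ∈
      {h : 𝒳 → ℝ | ∃ f ∈ F, ∃ t ∈ Set.Icc (0:ℝ) 1, h = fun xx => f' xx + t * (f xx - f' xx)} :=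
    ⟨fhat, hfhat, c, Set.Ioo_subset_Icc_self hc, rfl⟩
  have hstar2 : (fun xx => f' xx + (1:ℝ) * (fhat xx - f' xx)) ∈
      {h : 𝒳 → ℝ | ∃ f₁ ∈ F, ∃ t ∈ Set.Icc (0:ℝ) 1, h = fun xx => f' xx + t * (f₁ xx - f' xx)} :=
    ⟨fhat, hfhat, 1, Set.right_mem_Icc.2 zero_le_one, rfl⟩
  have hb := hmixed ghat hghat _ hstar _ hstar2
  have hdireq : (fun xx => (f' xx + (1:ℝ) * (fhat xx - f' xx)) - f' xx)
      = (fun xx => fhat xx - f' xx) := by funext xx; ring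
  rw [hdireq] at hb
  have hslope : (Lrisk g0 fhat - Lrisk g0 f') - (Lrisk ghat fhat - Lrisk ghat f')
      = Dfun g0 (fun xx => f' xx + c * (fhat xx - f' xx)) (fun xx => fhat xx - f' xx) -
        Dfun ghat (fun xx => f' xx + c * (fhat xx - f' xx)) (fun xx => fhat xx - f' xx) := by
    rw [← hφ1, hceq]; simp
  have habs := (abs_le.1 hb).1
  linarith [hslope, habs]
end
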